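/- For any real numbers n, d with n ≥ d ≥ e (Euler's number), we have d·(⌊log₂((n−d+1)/d)⌋ + 2) + d − 1 ≤ 2·d·log₂(n). -/
import Mathlib


theorem gbs_test_bound (n d : ℝ) (hnd : n ≥ d) (hd : d ≥ Real.exp 1) :
    d * ((⌊Real.logb 2 ((n - d + 1) / d)⌋ : ℝ) + 2) + d - 1 ≤ 2 * d * Real.logb 2 n := by
  have he1 : (1:ℝ) < Real.exp 1 := by
    have := Real.add_one_le_exp 1; linarith
  have hd1 : (1:ℝ) < d := lt_of_lt_of_le he1 hd
  have hd0 : (0:ℝ) < d := by linarith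
  have hn1 : (0:ℝ) < n - d + 1 := by linarith
  have hn0 : (0:ℝ) < n := by linarith
  have hl2 : (0:ℝ) < Real.log 2 := Real.log_pos (by norm_num)
  have hl2' : Real.log 2 < 0.6931471808 := Real.log_two_lt_d9
  -- floor bound
  have hfl : (⌊Real.logb 2 ((n - d + 1) / d)⌋ : ℝ) ≤ Real.logb 2 n - Real.logb 2 d := by
    refine le_trans (Int.floor_le _) ?_
    have h1 : Real.logb 2 ((n - d + 1) / d) ≤ Real.logb 2 (n / d) := by
      apply Real.logb_le_logb_of_le (by norm_num) (by positivity)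
      gcongr
      linarith
    have h2 : Real.logb 2 (n / d) = Real.logb 2 n - Real.logb 2 d :=
      Real.logb_div (ne_of_gt hn0) (ne_of_gt hd0)
    linarith [h1, h2.le, h2.ge]
  -- logb 2 d ≥ 1 / log 2
  have hde : Real.logb 2 d ≥ 1 / Real.log 2 := by
    have : Real.logb 2 (Real.exp 1) ≤ Real.logb 2 d :=
      Real.logb_le_logb_of_le (by norm_num) (Real.exp_pos 1) hd
    rwa [Real.logb, Real.log_exp] at this
  have hnd' : Real.logb 2 d ≤ Real.logb 2 n :=
    Real.logb_le_logb_of_le (by norm_num) hd0 hnd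
  have key : 3 * d - 1 ≤ d * Real.logb 2 n + d * Real.logb 2 d := by
    rcases le_or_gt d 3 with h3 | h3
    · -- d ≤ 3 : logb 2 d ≥ 1/log 2 > 4/3, and 3d - 1 ≤ 8/3 d ≤ 2 * (4/3) * d
      have h43 : (4:ℝ)/3 < 1 / Real.log 2 := by
        rw [lt_div_iff₀ hl2]; nlinarith
      nlinarith
    · -- d ≥ 3 : logb 2 d ≥ logb 2 3 ≥ 3/2
      have h32 : (3:ℝ)/2 ≤ Real.logb 2 d := by
        have hl3 : Real.logb 2 3 ≤ Real.logb 2 d :=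
          Real.logb_le_logb_of_le (by norm_num) (by norm_num) h3.le
        have h89 : Real.log 8 ≤ Real.log 9 := Real.log_le_log (by norm_num) (by norm_num)
        have h8 : Real.log 8 = 3 * Real.log 2 := by
          rw [show (8:ℝ) = 2^3 by norm_num, Real.log_pow]; push_cast; ring
        have h9 : Real.log 9 = 2 * Real.log 3 := by
          rw [show (9:ℝ) = 3^2 by norm_num, Real.log_pow]; push_cast; ring
        have : (3:ℝ)/2 ≤ Real.logb 2 3 := by
          rw [Real.logb, le_div_iff₀ hl2]; nlinarith
        linarith
      nlinarith
  nlinarith [key, mul_le_mul_of_nonneg_left hfl hd0.le]
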